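/- Let $\psi : \mathbb{N} \to (0,\infty)$ and let $T_n(x) = \frac{a_0}{2} + \sum_{k=1}^n (a_k\cos kx + b_k \sin kx)$ be a trigonometric polynomial satisfying $\max_t |T_n(t)| \le \frac{1}{\sqrt{\pi}}\left(\frac{1}{\psi^2(n)} + 2\sum_{k=1}^{n-1}\frac{1}{\psi^2(k)}\right)^{-1/2}$. Then $\sqrt{\pi}\left(\sum_{k=1}^{n-1}\frac{a_k^2+b_k^2}{\psi^2(k)} + \frac{a_n^2+b_n^2}{\psi^2(n)}\right)^{1/2} \le 1$. -/

import Mathlib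

open Real Finset intervalIntegral

/-! For `1 ≤ k ≤ n` the sinusoid `g x = a_k cos kx + b_k sin kx` satisfies
`∫ T g = ∫ g² = π (a_k² + b_k²)` over a period, so Bessel's inequality
`∫ g² ≤ ∫ T² ≤ 2π M²`, with `M = sup |T|`, gives `a_k² + b_k² ≤ 2 M²`.
For the top harmonic, the alternating sum `∑_{j < 2n} (-1)^j T (x + jπ/n)` kills every harmonic
of order `< n` and equals `2n (a_n cos nx + b_n sin nx)`; hence `|a_n cos θ + b_n sin θ| ≤ M`
for every `θ`, that is `a_n² + b_n² ≤ M²`. Weighting these bounds by `1 / ψ(k)²` and summing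
gives the claim. -/

theorem integral_cos_int_mul (j : ℤ) :
    ∫ x in (0 : ℝ)..2 * π, cos (j * x) = if j = 0 then 2 * π else 0 := by
  split_ifs with hj
  · simp [hj]
  · have hj' : (j : ℝ) ≠ 0 := mod_cast hj
    have : sin (j * (2 * π)) = 0 := by
      rw [← mul_assoc, mul_comm _ (2 : ℝ)]; exact_mod_cast sin_int_mul_pi (2 * j)
    simp [integral_comp_mul_left (fun x => cos x) hj', this]

theorem integral_sin_int_mul (j : ℤ) : ∫ x in (0 : ℝ)..2 * π, sin (j * x) = 0 := by
  rcases eq_or_ne j 0 with rfl | hj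
  · simp
  · have hj' : (j : ℝ) ≠ 0 := mod_cast hj
    have : cos (j * (2 * π)) = 1 := cos_int_mul_two_pi j
    simp [integral_comp_mul_left (fun x => sin x) hj', this]

theorem integral_cos_mul_cos (m k : ℕ) (hk : k ≠ 0) :
    ∫ x in (0 : ℝ)..2 * π, cos (m * x) * cos (k * x) = if m = k then π else 0 := by
  have h : ∀ x : ℝ, cos (m * x) * cos (k * x)
      = (cos (((m - k : ℤ) : ℝ) * x) + cos (((m + k : ℤ) : ℝ) * x)) / 2 := by
    intro x; push_cast; rw [sub_mul, add_mul, cos_sub, cos_add]; ring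
  simp_rw [h]
  rw [integral_div, integral_add ((by fun_prop : Continuous _).intervalIntegrable _ _)
    ((by fun_prop : Continuous _).intervalIntegrable _ _), integral_cos_int_mul,
    integral_cos_int_mul]
  split_ifs <;> first | omega | ring

theorem integral_sin_mul_sin (m k : ℕ) (hk : k ≠ 0) :
    ∫ x in (0 : ℝ)..2 * π, sin (m * x) * sin (k * x) = if m = k then π else 0 := by
  have h : ∀ x : ℝ, sin (m * x) * sin (k * x)
      = (cos (((m - k : ℤ) : ℝ) * x) - cos (((m + k : ℤ) : ℝ) * x)) / 2 := by
    intro x; push_cast; rw [sub_mul, add_mul, cos_sub, cos_add]; ring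
  simp_rw [h]
  rw [integral_div, integral_sub ((by fun_prop : Continuous _).intervalIntegrable _ _)
    ((by fun_prop : Continuous _).intervalIntegrable _ _), integral_cos_int_mul,
    integral_cos_int_mul]
  split_ifs <;> first | omega | ring

theorem integral_sin_mul_cos (m k : ℕ) :
    ∫ x in (0 : ℝ)..2 * π, sin (m * x) * cos (k * x) = 0 := by
  have h : ∀ x : ℝ, sin (m * x) * cos (k * x)
      = (sin (((m - k : ℤ) : ℝ) * x) + sin (((m + k : ℤ) : ℝ) * x)) / 2 := by
    intro x; push_cast; rw [sub_mul, add_mul, sin_sub, sin_add]; ring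
  simp_rw [h]
  rw [integral_div, integral_add ((by fun_prop : Continuous _).intervalIntegrable _ _)
    ((by fun_prop : Continuous _).intervalIntegrable _ _), integral_sin_int_mul,
    integral_sin_int_mul]
  simp

noncomputable def sinusoid (k : ℕ) (p q x : ℝ) : ℝ := p * cos (k * x) + q * sin (k * x)

noncomputable def trigPoly (a0 : ℝ) (a b : ℕ → ℝ) (n : ℕ) (x : ℝ) : ℝ :=
  a0 / 2 + ∑ k ∈ Icc 1 n, sinusoid k (a k) (b k) x

@[fun_prop]
theorem continuous_sinusoid (k : ℕ) (p q : ℝ) : Continuous (sinusoid k p q) := by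
  unfold sinusoid; fun_prop

@[fun_prop]
theorem continuous_trigPoly (a0 : ℝ) (a b : ℕ → ℝ) (n : ℕ) : Continuous (trigPoly a0 a b n) := by
  unfold trigPoly; fun_prop

theorem periodic_trigPoly (a0 : ℝ) (a b : ℕ → ℝ) (n : ℕ) :
    Function.Periodic (trigPoly a0 a b n) (2 * π) := by
  intro x
  simp only [trigPoly, sinusoid, mul_add, cos_add_nat_mul_two_pi, sin_add_nat_mul_two_pi]

theorem integral_sinusoid_mul_cos (m k : ℕ) (hk : k ≠ 0) (p q : ℝ) :
    ∫ x in (0 : ℝ)..2 * π, sinusoid m p q x * cos (k * x) = if m = k then π * p else 0 := by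
  simp only [sinusoid, add_mul, mul_assoc]
  rw [integral_add ((by fun_prop : Continuous _).intervalIntegrable _ _)
    ((by fun_prop : Continuous _).intervalIntegrable _ _), integral_const_mul, integral_const_mul,
    integral_cos_mul_cos m k hk, integral_sin_mul_cos]
  split_ifs <;> ring

theorem integral_sinusoid_mul_sin (m k : ℕ) (hk : k ≠ 0) (p q : ℝ) :
    ∫ x in (0 : ℝ)..2 * π, sinusoid m p q x * sin (k * x) = if m = k then π * q else 0 := by
  simp only [sinusoid, add_mul, mul_assoc, mul_comm (cos _) (sin _)]
  rw [integral_add ((by fun_prop : Continuous _).intervalIntegrable _ _)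
    ((by fun_prop : Continuous _).intervalIntegrable _ _), integral_const_mul, integral_const_mul,
    integral_sin_mul_sin m k hk, integral_sin_mul_cos]
  split_ifs <;> ring

theorem integral_trigPoly_mul {a0 : ℝ} {a b : ℕ → ℝ} {n : ℕ} {φ : ℝ → ℝ} (hφ : Continuous φ) :
    ∫ x in (0 : ℝ)..2 * π, trigPoly a0 a b n x * φ x =
      a0 / 2 * (∫ x in (0 : ℝ)..2 * π, φ x) +
        ∑ k ∈ Icc 1 n, ∫ x in (0 : ℝ)..2 * π, sinusoid k (a k) (b k) x * φ x := by
  simp only [trigPoly, add_mul, sum_mul]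
  rw [integral_add ((by fun_prop : Continuous _).intervalIntegrable _ _)
    ((by fun_prop : Continuous _).intervalIntegrable _ _), integral_const_mul,
    integral_finsetSum fun k _ => (by fun_prop : Continuous _).intervalIntegrable _ _]

theorem integral_trigPoly_mul_cos {a0 : ℝ} {a b : ℕ → ℝ} {n k : ℕ} (hk : k ∈ Icc 1 n) :
    ∫ x in (0 : ℝ)..2 * π, trigPoly a0 a b n x * cos (k * x) = π * a k := by
  have hk0 : k ≠ 0 := by grind
  simp_rw [integral_trigPoly_mul (by fun_prop : Continuous fun x => cos (k * x)),
    integral_sinusoid_mul_cos _ _ hk0, sum_ite_eq' _ _ (fun m => π * a m), if_pos hk]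
  have h := integral_cos_int_mul k
  rw [if_neg (mod_cast hk0), Int.cast_natCast] at h
  rw [h, mul_zero, zero_add]

theorem integral_trigPoly_mul_sin {a0 : ℝ} {a b : ℕ → ℝ} {n k : ℕ} (hk : k ∈ Icc 1 n) :
    ∫ x in (0 : ℝ)..2 * π, trigPoly a0 a b n x * sin (k * x) = π * b k := by
  have hk0 : k ≠ 0 := by grind
  simp_rw [integral_trigPoly_mul (by fun_prop : Continuous fun x => sin (k * x)),
    integral_sinusoid_mul_sin _ _ hk0, sum_ite_eq' _ _ (fun m => π * b m), if_pos hk]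
  have h := integral_sin_int_mul k
  rw [Int.cast_natCast] at h
  rw [h, mul_zero, zero_add]

theorem integral_mul_sinusoid {f : ℝ → ℝ} (hf : Continuous f) {k : ℕ} {p q : ℝ}
    (hcos : ∫ x in (0 : ℝ)..2 * π, f x * cos (k * x) = π * p)
    (hsin : ∫ x in (0 : ℝ)..2 * π, f x * sin (k * x) = π * q) :
    ∫ x in (0 : ℝ)..2 * π, f x * sinusoid k p q x = π * (p ^ 2 + q ^ 2) := by
  simp only [sinusoid, mul_add, mul_left_comm (f _)]
  rw [integral_add ((by fun_prop : Continuous _).intervalIntegrable _ _)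
    ((by fun_prop : Continuous _).intervalIntegrable _ _), integral_const_mul, integral_const_mul,
    hcos, hsin]
  ring

theorem integral_sq_le_of_integral_mul_eq {f g : ℝ → ℝ} {a b : ℝ} (hab : a ≤ b)
    (hf : Continuous f) (hg : Continuous g)
    (h : ∫ x in a..b, f x * g x = ∫ x in a..b, g x ^ 2) :
    ∫ x in a..b, g x ^ 2 ≤ ∫ x in a..b, f x ^ 2 := by
  have hexp : ∫ x in a..b, (f x - g x) ^ 2 =
      (∫ x in a..b, f x ^ 2) - 2 * (∫ x in a..b, f x * g x) + ∫ x in a..b, g x ^ 2 := by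
    simp only [sub_sq, mul_assoc]
    rw [integral_add ((by fun_prop : Continuous _).intervalIntegrable _ _)
      ((by fun_prop : Continuous _).intervalIntegrable _ _),
      integral_sub ((by fun_prop : Continuous _).intervalIntegrable _ _)
      ((by fun_prop : Continuous _).intervalIntegrable _ _), integral_const_mul]
  have hnonneg : 0 ≤ ∫ x in a..b, (f x - g x) ^ 2 :=
    integral_nonneg hab fun x _ => sq_nonneg _
  linarith

theorem sq_add_sq_le_two_mul_sq_of_abs_trigPoly_le {a0 M : ℝ} {a b : ℕ → ℝ} {n k : ℕ}
    (hM : ∀ x, |trigPoly a0 a b n x| ≤ M) (hk : k ∈ Icc 1 n) :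
    a k ^ 2 + b k ^ 2 ≤ 2 * M ^ 2 := by
  have hk0 : k ≠ 0 := by grind
  have hsq : ∫ x in (0 : ℝ)..2 * π, sinusoid k (a k) (b k) x ^ 2 = π * (a k ^ 2 + b k ^ 2) := by
    simp_rw [sq (sinusoid _ _ _ _)]
    exact integral_mul_sinusoid (by fun_prop)
      (by simpa using integral_sinusoid_mul_cos k k hk0 (a k) (b k))
      (by simpa using integral_sinusoid_mul_sin k k hk0 (a k) (b k))
  have hT : ∫ x in (0 : ℝ)..2 * π, trigPoly a0 a b n x * sinusoid k (a k) (b k) x =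
      π * (a k ^ 2 + b k ^ 2) :=
    integral_mul_sinusoid (by fun_prop) (integral_trigPoly_mul_cos hk)
      (integral_trigPoly_mul_sin hk)
  have hT2 : ∫ x in (0 : ℝ)..2 * π, trigPoly a0 a b n x ^ 2 ≤ ∫ _ in (0 : ℝ)..2 * π, M ^ 2 :=
    integral_mono_on (by positivity) ((by fun_prop : Continuous _).intervalIntegrable _ _)
      intervalIntegrable_const fun x _ => sq_le_sq.mpr ((hM x).trans (le_abs_self M))
  have hbessel := (integral_sq_le_of_integral_mul_eq (by positivity) (by fun_prop) (by fun_prop)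
    (hT.trans hsq.symm)).trans hT2
  rw [hsq, integral_const, smul_eq_mul, sub_zero] at hbessel
  nlinarith [pi_pos]

theorem sinusoid_eq_re (k : ℕ) (p q y : ℝ) :
    sinusoid k p q y = ((p - q * Complex.I) * Complex.exp (↑(k * y) * Complex.I)).re := by
  rw [Complex.mul_re, Complex.exp_ofReal_mul_I_re, Complex.exp_ofReal_mul_I_im]
  simp [sinusoid]

theorem sum_range_neg_one_pow_mul_exp {n k : ℕ} (hk : k < n) (x : ℝ) :
    ∑ j ∈ range (2 * n), (-1 : ℂ) ^ j * Complex.exp (↑(k * (x + j * π / n)) * Complex.I) = 0 := by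
  have hn : n ≠ 0 := by omega
  have hω := Complex.isPrimitiveRoot_exp (2 * n) (by omega)
  set ζ := Complex.exp (2 * π * Complex.I / ↑(2 * n)) ^ (n + k)
  have hζ : ζ ≠ 1 := by
    rw [Ne, hω.pow_eq_one_iff_dvd]
    exact Nat.not_dvd_of_pos_of_lt (by omega) (by omega)
  have hζN : ζ ^ (2 * n) = 1 := by rw [pow_right_comm, hω.pow_eq_one, one_pow]
  have hterm : ∀ j : ℕ, (-1 : ℂ) ^ j * Complex.exp (↑(k * (x + j * π / n)) * Complex.I) =
      Complex.exp (↑(k * x) * Complex.I) * ζ ^ j := by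
    intro j
    rw [← Complex.exp_pi_mul_I, ← Complex.exp_nat_mul, ← pow_mul, ← Complex.exp_nat_mul,
      ← Complex.exp_add, ← Complex.exp_add]
    congr 1
    push_cast
    field_simp
    ring
  rw [sum_congr rfl fun j _ => hterm j, ← mul_sum, geom_sum_eq hζ, hζN, sub_self, zero_div,
    mul_zero]

theorem sum_range_neg_one_pow_mul_sinusoid_of_lt {n k : ℕ} (hk : k < n) (p q x : ℝ) :
    ∑ j ∈ range (2 * n), (-1) ^ j * sinusoid k p q (x + j * π / n) = 0 := by
  simp_rw [sinusoid_eq_re, ← Complex.re_ofReal_mul, Complex.ofReal_pow, Complex.ofReal_neg,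
    Complex.ofReal_one, mul_left_comm _ (_ - _ : ℂ), ← Complex.re_sum, ← mul_sum,
    sum_range_neg_one_pow_mul_exp hk, mul_zero, Complex.zero_re]

theorem sinusoid_add_nat_mul_pi_div {n : ℕ} (hn : n ≠ 0) (j : ℕ) (p q x : ℝ) :
    sinusoid n p q (x + j * π / n) = (-1) ^ j * sinusoid n p q x := by
  have : (n : ℝ) * (x + j * π / n) = n * x + j * π := by field_simp
  simp only [sinusoid, this, cos_add_nat_mul_pi, sin_add_nat_mul_pi]
  ring

theorem sum_range_neg_one_pow_mul_trigPoly {n : ℕ} (hn : n ≠ 0) (a0 : ℝ) (a b : ℕ → ℝ) (x : ℝ) :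
    ∑ j ∈ range (2 * n), (-1) ^ j * trigPoly a0 a b n (x + j * π / n) =
      2 * n * sinusoid n (a n) (b n) x := by
  have hk : ∀ k ∈ Icc 1 n,
      ∑ j ∈ range (2 * n), (-1) ^ j * sinusoid k (a k) (b k) (x + j * π / n) =
        if k = n then 2 * n * sinusoid n (a n) (b n) x else 0 := by
    intro k hk
    split_ifs with hkn
    · subst hkn
      simp_rw [sinusoid_add_nat_mul_pi_div hn, ← mul_assoc, ← mul_pow]
      simp
    · exact sum_range_neg_one_pow_mul_sinusoid_of_lt (by grind) _ _ _
  simp_rw [trigPoly, mul_add, sum_add_distrib, ← sum_mul, neg_one_geom_sum, mul_sum]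
  rw [sum_comm, sum_congr rfl hk, sum_ite_eq', if_pos (mem_Icc.mpr ⟨by omega, le_rfl⟩),
    if_pos (even_two_mul n), zero_mul, zero_add]

theorem abs_sinusoid_le_of_abs_trigPoly_le {a0 M : ℝ} {a b : ℕ → ℝ} {n : ℕ} (hn : n ≠ 0)
    (hM : ∀ x, |trigPoly a0 a b n x| ≤ M) (x : ℝ) : |sinusoid n (a n) (b n) x| ≤ M := by
  have hn' : (0 : ℝ) < 2 * n := by positivity
  have : 2 * n * |sinusoid n (a n) (b n) x| ≤ 2 * n * M :=
    calc 2 * n * |sinusoid n (a n) (b n) x|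
        = |∑ j ∈ range (2 * n), (-1) ^ j * trigPoly a0 a b n (x + j * π / n)| := by
          rw [sum_range_neg_one_pow_mul_trigPoly hn, abs_mul, abs_of_pos hn']
      _ ≤ ∑ j ∈ range (2 * n), |trigPoly a0 a b n (x + j * π / n)| :=
          (abs_sum_le_sum_abs _ _).trans_eq (by simp)
      _ ≤ 2 * n * M := (sum_le_card_nsmul _ _ _ fun j _ => hM _).trans_eq (by simp)
  exact le_of_mul_le_mul_left this hn'

theorem sq_add_sq_le_of_forall_abs_le {p q M : ℝ} (h : ∀ θ, |p * cos θ + q * sin θ| ≤ M) :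
    p ^ 2 + q ^ 2 ≤ M ^ 2 := by
  set z : ℂ := ⟨p, q⟩
  rcases eq_or_ne z 0 with hz | hz
  · have hp : p = 0 := congrArg Complex.re hz
    have hq : q = 0 := congrArg Complex.im hz
    simp [hp, hq, sq_nonneg]
  have hz' : 0 < ‖z‖ := norm_pos_iff.mpr hz
  have hnorm : ‖z‖ ^ 2 = p ^ 2 + q ^ 2 := by rw [Complex.sq_norm, Complex.normSq_mk]; ring
  have hval : p * cos z.arg + q * sin z.arg = ‖z‖ := by
    rw [Complex.cos_arg hz, Complex.sin_arg]
    field_simp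
    change p * p + q * q = _
    rw [hnorm]
    ring
  rw [← hnorm]
  have := h z.arg
  rw [hval, abs_of_pos hz'] at this
  exact pow_le_pow_left₀ hz'.le this 2

theorem sq_add_sq_le_sq_of_abs_trigPoly_le {a0 M : ℝ} {a b : ℕ → ℝ} {n : ℕ} (hn : n ≠ 0)
    (hM : ∀ x, |trigPoly a0 a b n x| ≤ M) : a n ^ 2 + b n ^ 2 ≤ M ^ 2 := by
  refine sq_add_sq_le_of_forall_abs_le fun θ => ?_
  have := abs_sinusoid_le_of_abs_trigPoly_le hn hM (θ / n)
  rwa [sinusoid, mul_div_cancel₀ θ (Nat.cast_ne_zero.mpr hn)] at this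

theorem bddAbove_range_abs_trigPoly (a0 : ℝ) (a b : ℕ → ℝ) (n : ℕ) :
    BddAbove (Set.range fun t => |trigPoly a0 a b n t|) :=
  ((periodic_trigPoly a0 a b n).comp abs).compact_of_continuous (by positivity)
    (continuous_abs.comp (continuous_trigPoly a0 a b n)) |>.bddAbove

theorem embedding_step_general (ψ : ℕ → ℝ) (n : ℕ) (hn : 1 ≤ n)
    (a b : ℕ → ℝ) (a0 : ℝ) (T : ℝ → ℝ)
    (hT : ∀ x, T x = a0 / 2 + ∑ k ∈ Finset.Icc 1 n,
      (a k * Real.cos (k * x) + b k * Real.sin (k * x)))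
    (hnorm : (⨆ t : ℝ, |T t|) ≤ (1 / Real.sqrt π) *
      (Real.sqrt (1 / ψ n ^ 2 + 2 * ∑ k ∈ Finset.Icc 1 (n - 1), 1 / ψ k ^ 2))⁻¹) :
    Real.sqrt π * Real.sqrt (∑ k ∈ Finset.Icc 1 (n - 1), (a k ^ 2 + b k ^ 2) / ψ k ^ 2 +
      (a n ^ 2 + b n ^ 2) / ψ n ^ 2) ≤ 1 := by
  obtain rfl : T = trigPoly a0 a b n := funext hT
  set M := ⨆ t, |trigPoly a0 a b n t|
  set W := 1 / ψ n ^ 2 + 2 * ∑ k ∈ Icc 1 (n - 1), 1 / ψ k ^ 2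
  have hM : ∀ x, |trigPoly a0 a b n x| ≤ M := le_ciSup (bddAbove_range_abs_trigPoly a0 a b n)
  have hM0 : 0 ≤ M := (abs_nonneg _).trans (hM 0)
  have hsum : ∑ k ∈ Icc 1 (n - 1), (a k ^ 2 + b k ^ 2) / ψ k ^ 2 +
      (a n ^ 2 + b n ^ 2) / ψ n ^ 2 ≤ M ^ 2 * W :=
    calc _ ≤ ∑ k ∈ Icc 1 (n - 1), 2 * M ^ 2 / ψ k ^ 2 + M ^ 2 / ψ n ^ 2 := by
          gcongr with k hk
          · exact sq_add_sq_le_two_mul_sq_of_abs_trigPoly_le hM (by grind)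
          · exact sq_add_sq_le_sq_of_abs_trigPoly_le (by omega) hM
      _ = M ^ 2 * W := by simp only [W, mul_add, mul_sum]; ring_nf
  calc √π * √(_ : ℝ) ≤ √π * √(M ^ 2 * W) := by gcongr
    _ = √π * M * √W := by rw [sqrt_mul (sq_nonneg M), sqrt_sq hM0, mul_assoc]
    _ ≤ √π * (1 / √π * (√W)⁻¹) * √W := by gcongr
    _ ≤ 1 := by
      rw [← mul_assoc, mul_one_div_cancel (sqrt_pos.mpr pi_pos).ne', one_mul]
      exact inv_mul_le_one

theorem embedding_step (ψ : ℕ → ℝ) (hψ : ∀ k, 0 < ψ k) (n : ℕ) (hn : 1 ≤ n)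
    (a b : ℕ → ℝ) (a0 : ℝ) (T : ℝ → ℝ)
    (hT : ∀ x, T x = a0 / 2 + ∑ k ∈ Finset.Icc 1 n,
      (a k * Real.cos (k * x) + b k * Real.sin (k * x)))
    (hnorm : (⨆ t : ℝ, |T t|) ≤ (1 / Real.sqrt π) *
      (Real.sqrt (1 / ψ n ^ 2 + 2 * ∑ k ∈ Finset.Icc 1 (n - 1), 1 / ψ k ^ 2))⁻¹) :
    Real.sqrt π * Real.sqrt (∑ k ∈ Finset.Icc 1 (n - 1), (a k ^ 2 + b k ^ 2) / ψ k ^ 2 +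
      (a n ^ 2 + b n ^ 2) / ψ n ^ 2) ≤ 1 :=
  embedding_step_general ψ n hn a b a0 T hT hnorm
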